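/- arXiv:1304.0531 — 5 statements merged into one kernel-verified Lean document; each statement's English description precedes it below -/
import Mathlib

section
/- Let V be a finite free k-module regarded as purely odd. The canonical pairing V × V* → k extends uniquely to a Hopf pairing ⟨·,·⟩ : Λ(V) × Λ(V*) → k determined by ⟨Λᵐ(V), Λⁿ(V*)⟩ = 0 for m ≠ n and ⟨v₁∧⋯∧vₙ, w₁∧⋯∧wₙ⟩ = Σ_{σ ∈ Sₙ} sgn(σ) ⟨v₁, w_{σ(1)}⟩ ⋯ ⟨vₙ, w_{σ(n)}⟩, and this pairing is non-degenerate, inducing an isomorphism Λ(V*) ≅ Λ(V)* of Hopf superalgebras. -/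
/-!
On `⋀ⁿ V` the determinant pairing with `⋀ⁿ V*` is `exteriorPower.pairingDual`; summing it over
the grading `Λ(V) = ⨁ₙ ⋀ⁿ V` gives a pairing with the required properties, and it is the only
one because the products `v₁ ∧ ⋯ ∧ vₙ` span `Λ(V)`. For a basis `(eᵢ)` of `V`, the pairing sends
the basis `e_S` of `Λ(V)` and the basis `e*_T` of `Λ(V*)` built from the dual basis to `δ_{S,T}`,
so `Λ(V*) → Λ(V)*` maps a basis to a basis.
-/

open ExteriorAlgebra

/-- The conditions determining the canonical pairing Λ(V) × Λ(V*) → k: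
orthogonality of different exterior degrees, and the determinant-like formula
on products of generators. -/
def PairingConds (k V : Type*) [CommRing k] [AddCommGroup V] [Module k V]
    (B : ExteriorAlgebra k V →ₗ[k] ExteriorAlgebra k (Module.Dual k V) →ₗ[k] k) : Prop :=
  (∀ (m n : ℕ) (v : Fin m → V) (w : Fin n → Module.Dual k V), m ≠ n →
      B ((List.ofFn fun i => ι k (v i)).prod) ((List.ofFn fun i => ι k (w i)).prod) = 0) ∧
  (∀ (n : ℕ) (v : Fin n → V) (w : Fin n → Module.Dual k V),
      B ((List.ofFn fun i => ι k (v i)).prod) ((List.ofFn fun i => ι k (w i)).prod) =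
        ∑ σ : Equiv.Perm (Fin n), (Equiv.Perm.sign σ : ℤ) • ∏ i, (w (σ i)) (v i))

namespace LinearMap

variable {R M N ι : Type*} [CommSemiring R] [AddCommMonoid M] [Module R M] [AddCommMonoid N]
  [Module R N] [DecidableEq ι] [Finite ι]

theorem flip_bijective_of_biorthogonal (B : M →ₗ[R] N →ₗ[R] R) (b : Module.Basis ι R M)
    (c : Module.Basis ι R N) (hB : ∀ i j, B (b i) (c j) = if i = j then 1 else 0) :
    Function.Bijective B.flip := by
  have : B.flip = (c.equiv b.dualBasis (Equiv.refl ι)).toLinearMap :=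
    c.ext fun j => b.ext fun i => by simp [hB, Finsupp.single_apply, eq_comm]
  rw [this]
  exact LinearEquiv.bijective _

end LinearMap

namespace ExteriorAlgebra

open DirectSum exteriorPower

variable {k V : Type*} [CommRing k] [AddCommGroup V] [Module k V]

noncomputable def dualPairing :
    ExteriorAlgebra k V →ₗ[k] ExteriorAlgebra k (Module.Dual k V) →ₗ[k] k :=
  toModule k ℕ _ (fun n => (pairingDual k V n).flip.compl₂ (component k ℕ _ n ∘ₗ
      (decomposeLinearEquiv fun n => ⋀[k]^n (Module.Dual k V)).toLinearMap)) ∘ₗ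
    (decomposeLinearEquiv fun n => ⋀[k]^n V).toLinearMap

lemma dualPairing_coe_apply {m : ℕ} (x : ⋀[k]^m V) (y : ExteriorAlgebra k (Module.Dual k V)) :
    dualPairing (x : ExteriorAlgebra k V) y =
      pairingDual k V m (decompose (fun n => ⋀[k]^n (Module.Dual k V)) y m) x := by
  rw [dualPairing, LinearMap.comp_apply, LinearEquiv.coe_coe, decomposeLinearEquiv_apply,
    decompose_coe, ← lof_eq_of k, toModule_lof]
  rfl

lemma dualPairing_coe_coe {n : ℕ} (x : ⋀[k]^n V) (y : ⋀[k]^n (Module.Dual k V)) :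
    dualPairing (x : ExteriorAlgebra k V) (y : ExteriorAlgebra k (Module.Dual k V)) =
      pairingDual k V n y x := by
  rw [dualPairing_coe_apply, decompose_coe, of_eq_same]

lemma dualPairing_coe_coe_of_ne {m n : ℕ} (x : ⋀[k]^m V) (y : ⋀[k]^n (Module.Dual k V))
    (h : m ≠ n) :
    dualPairing (x : ExteriorAlgebra k V) (y : ExteriorAlgebra k (Module.Dual k V)) = 0 := by
  rw [dualPairing_coe_apply, decompose_coe, of_eq_of_ne _ _ _ h, map_zero, LinearMap.zero_apply]

theorem pairingConds_dualPairing : PairingConds k V dualPairing := by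
  refine ⟨fun m n v w h => ?_, fun n v w => ?_⟩
  · simp_rw [← ιMulti_apply, ← exteriorPower.ιMulti_apply_coe]
    exact dualPairing_coe_coe_of_ne _ _ h
  · simp_rw [← ιMulti_apply, ← exteriorPower.ιMulti_apply_coe, dualPairing_coe_coe,
      pairingDual_ιMulti_ιMulti]
    rw [← Matrix.det_transpose, Matrix.det_apply]
    rfl

variable {I : Type*} [LinearOrder I] [Finite I] [DecidableEq I]

lemma pairingDual_exteriorPower_dualBasis (b : Module.Basis I k V) {n : ℕ}
    (t : Set.powersetCard I n) :
    pairingDual k V n (b.dualBasis.exteriorPower n t) = (b.exteriorPower n).coord t := by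
  rw [exteriorPower.basis_coord, exteriorPower.basis_apply, Module.Basis.coe_dualBasis]
  rfl

lemma dualPairing_basis_basis (b : Module.Basis I k V) (s t : Finset I) :
    dualPairing (b.ExteriorAlgebra s) (b.dualBasis.ExteriorAlgebra t) =
      if s = t then 1 else 0 := by
  obtain ⟨m, s, rfl⟩ : ∃ m, ∃ s' : Set.powersetCard I m, (s' : Finset I) = s :=
    ⟨_, Set.powersetCard.ofCard rfl, rfl⟩
  obtain ⟨n, t, rfl⟩ : ∃ n, ∃ t' : Set.powersetCard I n, (t' : Finset I) = t :=
    ⟨_, Set.powersetCard.ofCard rfl, rfl⟩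
  rw [basis_eq_coe_basis, basis_eq_coe_basis]
  by_cases h : m = n
  · subst h
    rw [dualPairing_coe_coe, pairingDual_exteriorPower_dualBasis, Module.Basis.coord_apply,
      Module.Basis.repr_self, Finsupp.single_apply]
    exact if_congr Subtype.ext_iff rfl rfl
  · rw [dualPairing_coe_coe_of_ne _ _ h, if_neg]
    exact fun hst => h (by rw [← Set.powersetCard.card_eq s, hst, Set.powersetCard.card_eq])

end ExteriorAlgebra

theorem PairingConds.eq {k V : Type*} [CommRing k] [AddCommGroup V] [Module k V]
    {B B' : ExteriorAlgebra k V →ₗ[k] ExteriorAlgebra k (Module.Dual k V) →ₗ[k] k}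
    (hB : PairingConds k V B) (hB' : PairingConds k V B') : B = B' := by
  refine LinearMap.ext_on_range (ιMulti_span k _) fun ⟨m, v⟩ => ?_
  refine LinearMap.ext_on_range (ιMulti_span k _) fun ⟨n, w⟩ => ?_
  simp only [ιMulti_apply]
  by_cases h : m = n
  · subst h
    rw [hB.2, hB'.2]
  · rw [hB.1 _ _ _ _ h, hB'.1 _ _ _ _ h]

/-- For a finite free k-module V, the canonical pairing V × V* → k extends
uniquely to a pairing Λ(V) × Λ(V*) → k with ⟨Λᵐ(V),Λⁿ(V*)⟩ = 0 for m ≠ n and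
the determinant formula on products of generators; moreover this pairing is
non-degenerate: the induced map Λ(V*) → Λ(V)* is bijective. -/
theorem stmt6 (k V : Type*) [CommRing k] [AddCommGroup V] [Module k V]
    [Module.Free k V] [Module.Finite k V] :
    (∃! B : ExteriorAlgebra k V →ₗ[k] ExteriorAlgebra k (Module.Dual k V) →ₗ[k] k,
      PairingConds k V B) ∧
    ∀ B : ExteriorAlgebra k V →ₗ[k] ExteriorAlgebra k (Module.Dual k V) →ₗ[k] k,
      PairingConds k V B →
        Function.Bijective
          (B.flip : ExteriorAlgebra k (Module.Dual k V) → (ExteriorAlgebra k V →ₗ[k] k)) := by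
  refine ⟨⟨dualPairing, pairingConds_dualPairing, fun B hB => hB.eq pairingConds_dualPairing⟩,
    fun B hB => ?_⟩
  obtain rfl := hB.eq pairingConds_dualPairing
  classical
  let : LinearOrder (Module.Free.ChooseBasisIndex k V) := linearOrderOfSTO WellOrderingRel
  let b := Module.Free.chooseBasis k V
  exact LinearMap.flip_bijective_of_biorthogonal dualPairing b.ExteriorAlgebra
    b.dualBasis.ExteriorAlgebra (dualPairing_basis_basis b)
end

section
/- Let g be an admissible Lie superalgebra (g₀ k-flat, g₁ k-free, [v,v] 2-divisible for all odd v), J = U(g₀), and let V = g₁ carry the right J-module structure extending the right adjoint action v◁u = [v,u]. Then: (a) [u◁a₍₁₎, v◁a₍₂₎] = S(a₍₁₎)[u,v]a₍₂₎ in J, (b) [u,v] = [v,u], (c) v◁[v,v] = 0, and these imply (d) u◁[v,w] + v◁[w,u] + w◁[u,v] = 0 for all u,v,w ∈ V, a ∈ J. -/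
/-!
Write `Φᵤᵥ(a) = ∑ ι[u ◁ a₍₁₎, v ◁ a₍₂₎]`. In the convolution algebra of linear endomorphisms
of `J`, the identity `id ⋆ Φᵤᵥ = ι[u,v] · (-)` holds on primitive generators by the Jacobi
identity for `[g₁, g₁]` against `g₀`, and it survives products because
`Φᵤᵥ(x y) = ∑ Φ_{u ◁ x₍₁₎, v ◁ x₍₂₎}(y)`. Convolving on the left with the antipode
(`S ⋆ id = 1`) gives (a). Polarizing `x ◁ [x,x] = 0` at `x = u + v + w` yields twice the cyclic
sum in (d).
-/

open TensorProduct Coalgebra WithConv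

namespace DualHarishChandra

variable {k V J : Type*} [CommRing k] [AddCommGroup V] [Module k V] [Ring J]

section Bialgebra

variable [Bialgebra k J]

noncomputable def diagBracket (β : V →ₗ[k] V →ₗ[k] J) (act : V →ₗ[k] J →ₗ[k] V) (u v : V) :
    J →ₗ[k] J :=
  lift β ∘ₗ map (act u) (act v) ∘ₗ comul

variable {β : V →ₗ[k] V →ₗ[k] J} {act : V →ₗ[k] J →ₗ[k] V}

lemma diagBracket_eq_sum {ιx : Type*} {a : J} (𝓡 : Repr k a ιx) (u v : V) :
    diagBracket β act u v a = ∑ i ∈ 𝓡.index, β (act u (𝓡.left i)) (act v (𝓡.right i)) := by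
  simp [diagBracket, ← 𝓡.eq]

lemma diagBracket_mul (hactmul : ∀ (v : V) (x y : J), act v (x * y) = act (act v x) y)
    {ιx : Type*} {p : J} (𝓡 : Repr k p ιx) (q : J) (u v : V) :
    diagBracket β act u v (p * q) =
      ∑ i ∈ 𝓡.index, diagBracket β act (act u (𝓡.left i)) (act v (𝓡.right i)) q := by
  simp [diagBracket_eq_sum (𝓡.mul (ℛ k q)), diagBracket_eq_sum (ℛ k q), Finset.sum_product,
    hactmul]

lemma id_convMul_diagBracket_apply {s : Set J} (hs : Algebra.adjoin k s = ⊤)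
    (hprim : ∀ x ∈ s, comul (R := k) x = x ⊗ₜ 1 + 1 ⊗ₜ x)
    (hβ : ∀ x ∈ s, ∀ u v : V, β (act u x) v + β u (act v x) = β u v * x - x * β u v)
    (hact1 : ∀ v : V, act v 1 = v)
    (hactmul : ∀ (v : V) (x y : J), act v (x * y) = act (act v x) y) (a : J) (u v : V) :
    (toConv LinearMap.id * toConv (diagBracket β act u v) : WithConv (J →ₗ[k] J)) a =
      β u v * a := by
  have ha : a ∈ Algebra.adjoin k s := hs ▸ Algebra.mem_top
  induction ha using Algebra.adjoin_induction generalizing u v with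
  | mem x hx =>
    have h1 : diagBracket β act u v 1 = β u v := by
      simp [diagBracket, Algebra.TensorProduct.one_def, hact1]
    have hx' : diagBracket β act u v x = β (act u x) v + β u (act v x) := by
      simp [diagBracket, hprim x hx, hact1]
    simp [hprim x hx, h1, hx', hβ x hx]
  | algebraMap r =>
    simp [Algebra.algebraMap_eq_smul_one, diagBracket, Algebra.TensorProduct.one_def, hact1]
  | add x y _ _ hx hy => simp only [map_add, mul_add, hx, hy]
  | mul x y _ _ hx hy =>
    set 𝓧 := ℛ k x
    set 𝓨 := ℛ k y
    calc (toConv LinearMap.id * toConv (diagBracket β act u v) : WithConv (J →ₗ[k] J)) (x * y)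
        = ∑ i ∈ 𝓧.index, 𝓧.left i * ∑ l ∈ (ℛ k (𝓧.right i)).index,
            (toConv LinearMap.id * toConv (diagBracket β act (act u ((ℛ k (𝓧.right i)).left l))
              (act v ((ℛ k (𝓧.right i)).right l))) : WithConv (J →ₗ[k] J)) y := by
          rw [(𝓧.mul 𝓨).convMul_apply, Coalgebra.Repr.mul_index, Finset.sum_product]
          simp [diagBracket_mul hactmul (ℛ k _), 𝓨.convMul_apply, Finset.mul_sum, mul_assoc,
            Finset.sum_comm (s := 𝓨.index)]
      _ = (toConv LinearMap.id * toConv (diagBracket β act u v) : WithConv (J →ₗ[k] J)) x * y := by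
          simp [hy, 𝓧.convMul_apply, diagBracket_eq_sum (ℛ k _), Finset.sum_mul, Finset.mul_sum,
            mul_assoc]
      _ = β u v * (x * y) := by rw [hx, mul_assoc]

end Bialgebra

lemma diagBracket_eq_sum_antipode_mul [HopfAlgebra k J]
    {β : V →ₗ[k] V →ₗ[k] J} {act : V →ₗ[k] J →ₗ[k] V} {s : Set J}
    (hs : Algebra.adjoin k s = ⊤) (hprim : ∀ x ∈ s, comul (R := k) x = x ⊗ₜ 1 + 1 ⊗ₜ x)
    (hβ : ∀ x ∈ s, ∀ u v : V, β (act u x) v + β u (act v x) = β u v * x - x * β u v)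
    (hact1 : ∀ v : V, act v 1 = v)
    (hactmul : ∀ (v : V) (x y : J), act v (x * y) = act (act v x) y) (u v : V) (a : J) :
    diagBracket β act u v a =
      LinearMap.mul' k J
        (map (LinearMap.mulRight k (β u v) ∘ₗ HopfAlgebra.antipode k) LinearMap.id (comul a)) := by
  have hid : toConv LinearMap.id * toConv (diagBracket β act u v) =
      toConv (LinearMap.mulLeft k (β u v)) :=
    WithConv.ext <| LinearMap.ext fun a ↦
      id_convMul_diagBracket_apply hs hprim hβ hact1 hactmul a u v
  have hS : toConv (diagBracket β act u v) =
      toConv (HopfAlgebra.antipode k) * toConv (LinearMap.mulLeft k (β u v)) := by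
    rw [← hid, ← mul_assoc, LinearMap.antipode_mul_id (R := k), one_mul]
  rw [← ofConv_toConv (diagBracket β act u v), hS, (ℛ k a).convMul_apply]
  simp [← (ℛ k a).eq, mul_assoc]

variable {L : Type*} [AddCommGroup L] [Module k L]

lemma cyclic_sum_eq_zero_of_apply_self (h2V : ∀ x : V, (2 : k) • x = 0 → x = 0)
    {b : V →ₗ[k] V →ₗ[k] L} {ρ : V →ₗ[k] L →ₗ[k] V} (hsym : ∀ u v : V, b u v = b v u)
    (hself : ∀ v : V, ρ v (b v v) = 0) (u v w : V) :
    ρ u (b v w) + ρ v (b w u) + ρ w (b u v) = 0 := by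
  apply h2V
  have h1 := hself (u + v + w)
  have h2 := hself (u + v)
  have h3 := hself (v + w)
  have h4 := hself (u + w)
  simp only [map_add, LinearMap.add_apply, ← hsym u v, ← hsym u w, ← hsym v w] at h1 h2 h3 h4
  rw [two_smul, ← hsym u w]
  linear_combination (norm := abel) h1 - h2 - h3 - h4 + hself u + hself v + hself w

end DualHarishChandra

open DualHarishChandra

theorem stmt10_general (k L V J : Type*) [CommRing k]
    [LieRing L] [LieAlgebra k L]
    [AddCommGroup V] [Module k V]
    [Ring J] [HopfAlgebra k J]
    (h2V : ∀ x : V, (2 : k) • x = 0 → x = 0)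
    -- odd-odd bracket and right adjoint action of L on V
    (b : V →ₗ[k] V →ₗ[k] L) (aVL : V →ₗ[k] L →ₗ[k] V)
    -- Lie superalgebra axioms
    (hsym : ∀ u v : V, b u v = b v u)
    (hodd3 : ∀ v : V, aVL v (b v v) = 0)
    (hjac011 : ∀ (v w : V) (x : L), ⁅b v w, x⁆ = b (aVL v x) w + b v (aVL w x))
    -- J = U(g₀): the embedding ι of L as primitives, generating J
    (ι : L →ₗ[k] J)
    (hιbr : ∀ u w : L, ι ⁅u, w⁆ = ι u * ι w - ι w * ι u)
    (hprim : ∀ u : L, Coalgebra.comul (R := k) (ι u) = ι u ⊗ₜ 1 + 1 ⊗ₜ ι u)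
    (hgen : Algebra.adjoin k (Set.range ι) = ⊤)
    -- the right J-module structure on V extending the adjoint action
    (act : V →ₗ[k] J →ₗ[k] V)
    (hact1 : ∀ v : V, act v 1 = v)
    (hactmul : ∀ (v : V) (x y : J), act v (x * y) = act (act v x) y)
    (hactι : ∀ (v : V) (u : L), act v (ι u) = aVL v u) :
    -- (a)
    (∀ (u v : V) (a : J),
      (ι ∘ₗ (TensorProduct.lift b) ∘ₗ (TensorProduct.map (act u) (act v)))
          (Coalgebra.comul (R := k) a) =
        (LinearMap.mul' k J)
          ((TensorProduct.map
              ((LinearMap.mulRight k (ι (b u v))) ∘ₗ HopfAlgebra.antipode (R := k))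
              LinearMap.id)
            (Coalgebra.comul (R := k) a))) ∧
    -- (b)
    (∀ u v : V, b u v = b v u) ∧
    -- (c)
    (∀ v : V, act v (ι (b v v)) = 0) ∧
    -- (d)
    (∀ u v w : V, aVL u (b v w) + aVL v (b w u) + aVL w (b u v) = 0) := by
  have hprim_range : ∀ x ∈ Set.range ι, comul (R := k) x = x ⊗ₜ 1 + 1 ⊗ₜ x := by
    rintro _ ⟨w, rfl⟩
    exact hprim w
  have hβ : ∀ x ∈ Set.range ι, ∀ u v : V, b.compr₂ ι (act u x) v + b.compr₂ ι u (act v x) =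
      b.compr₂ ι u v * x - x * b.compr₂ ι u v := by
    rintro _ ⟨w, rfl⟩ u v
    simp only [LinearMap.compr₂_apply, hactι, ← map_add, ← hjac011, hιbr]
  refine ⟨fun u v a ↦ ?_, hsym, fun v ↦ by rw [hactι, hodd3],
    cyclic_sum_eq_zero_of_apply_self h2V hsym hodd3⟩
  have hdiag := diagBracket_eq_sum_antipode_mul hgen hprim_range hβ hact1 hactmul u v a
  simpa only [diagBracket, lift_compr₂, LinearMap.comp_apply, LinearMap.compr₂_apply] using hdiag

/-- The dual Harish-Chandra pair lemma.  g is an admissible Lie superalgebra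
over a 2-torsion free ring k; L = g₀ is its even part, V = g₁ its odd part
(k-free, hence 2-torsion free), b = [·,·] : V × V → L the restricted bracket
and aVL v u = [v,u] the right adjoint action.  J models U(g₀): a cocommutative
Hopf algebra generated by the primitive elements ι(u), u ∈ L, and
`act : V × J → V` is the right J-module structure extending the adjoint
action.  Then:
(a) [u◁a₍₁₎, v◁a₍₂₎] = S(a₍₁₎)[u,v]a₍₂₎ in J,
(b) [u,v] = [v,u],
(c) v◁[v,v] = 0, and
(d) u◁[v,w] + v◁[w,u] + w◁[u,v] = 0. -/
theorem stmt10 (k L V J : Type*) [CommRing k]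
    [LieRing L] [LieAlgebra k L]
    [AddCommGroup V] [Module k V]
    [Ring J] [HopfAlgebra k J]
    (h2k : ∀ a : k, 2 * a = 0 → a = 0)
    (h2V : ∀ x : V, (2 : k) • x = 0 → x = 0)
    -- odd-odd bracket and right adjoint action of L on V
    (b : V →ₗ[k] V →ₗ[k] L) (aVL : V →ₗ[k] L →ₗ[k] V)
    -- Lie superalgebra axioms
    (hsym : ∀ u v : V, b u v = b v u)
    (hodd3 : ∀ v : V, aVL v (b v v) = 0)
    (hmod : ∀ (v : V) (x y : L), aVL v ⁅x, y⁆ = aVL (aVL v x) y - aVL (aVL v y) x)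
    (hjac011 : ∀ (v w : V) (x : L), ⁅b v w, x⁆ = b (aVL v x) w + b v (aVL w x))
    -- admissibility: [v,v] is 2-divisible
    (half : V → L) (hhalf : ∀ v : V, (2 : k) • half v = b v v)
    -- J = U(g₀): the embedding ι of L as primitives, generating J
    (ι : L →ₗ[k] J)
    (hιbr : ∀ u w : L, ι ⁅u, w⁆ = ι u * ι w - ι w * ι u)
    (hprim : ∀ u : L, Coalgebra.comul (R := k) (ι u) = ι u ⊗ₜ 1 + 1 ⊗ₜ ι u)
    (hgen : Algebra.adjoin k (Set.range ι) = ⊤)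
    (hcocomm : ∀ a : J, (TensorProduct.comm k J J) (Coalgebra.comul (R := k) a) = Coalgebra.comul a)
    -- the right J-module structure on V extending the adjoint action
    (act : V →ₗ[k] J →ₗ[k] V)
    (hact1 : ∀ v : V, act v 1 = v)
    (hactmul : ∀ (v : V) (x y : J), act v (x * y) = act (act v x) y)
    (hactι : ∀ (v : V) (u : L), act v (ι u) = aVL v u) :
    -- (a)
    (∀ (u v : V) (a : J),
      (ι ∘ₗ (TensorProduct.lift b) ∘ₗ (TensorProduct.map (act u) (act v)))
          (Coalgebra.comul (R := k) a) =
        (LinearMap.mul' k J)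
          ((TensorProduct.map
              ((LinearMap.mulRight k (ι (b u v))) ∘ₗ HopfAlgebra.antipode (R := k))
              LinearMap.id)
            (Coalgebra.comul (R := k) a))) ∧
    -- (b)
    (∀ u v : V, b u v = b v u) ∧
    -- (c)
    (∀ v : V, act v (ι (b v v)) = 0) ∧
    -- (d)
    (∀ u v w : V, aVL u (b v w) + aVL v (b w u) + aVL w (b u v) = 0) :=
  stmt10_general k L V J h2V b aVL hsym hodd3 hjac011 ι hιbr hprim hgen act hact1 hactmul hactι
end

section
/- Let g be a Lie superalgebra over a commutative ring k with a 2-operation (·)^⟨2⟩, and suppose g₁ is k-free. For any commutative k-algebra R, the formula (Σᵢ xᵢ⊗cᵢ)^⟨2⟩_R := Σᵢ xᵢ^⟨2⟩⊗cᵢ² + Σ_{i<j} [xᵢ,xⱼ]⊗cᵢcⱼ (for a totally ordered basis x₁<⋯<xₙ of g₁ and cᵢ ∈ R) is independent of the choice of ordered basis and defines a 2-operation on the R-Lie superalgebra g⊗R. Moreover, for arbitrary vᵢ ∈ g₁, cᵢ ∈ R, one has (Σᵢ vᵢ⊗cᵢ)^⟨2⟩_R = Σᵢ vᵢ^⟨2⟩⊗cᵢ²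 + Σ_{i<j}[vᵢ,vⱼ]⊗cᵢcⱼ. -/
/-!
Since g₁ is free, the quadratic map q is the diagonal v ↦ B v v of some, in general
non-symmetric, bilinear map B (e.g. the triangular one attached to an ordered basis). The diagonal
of the base change B_R is a quadratic map on R ⊗ g₁ taking the value c² ⊗ q v on c ⊗ v, and its
polar form is the base change of the polar form b₁₁ of q. Expanding a sum of pure tensors gives the
displayed formula, which in turn pins the map down. A quadratic map on R ⊗ M is determined by its
values on the tensors 1 ⊗ m, and both sides of [x^⟨2⟩, z] = [x, [x, z]] are quadratic in x, so
this identity over R follows from the one over k.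
-/

open TensorProduct

theorem TensorProduct.exists_eq_sum_fin_tmul {k M N : Type*} [CommSemiring k] [AddCommMonoid M]
    [AddCommMonoid N] [Module k M] [Module k N] (x : M ⊗[k] N) :
    ∃ (n : ℕ) (m : Fin n → M) (m' : Fin n → N), x = ∑ i, m i ⊗ₜ m' i := by
  obtain ⟨S, rfl⟩ := exists_finset x
  refine ⟨S.card, fun i => (S.equivFin.symm i).1.1, fun i => (S.equivFin.symm i).1.2, ?_⟩
  rw [← Finset.sum_coe_sort, ← S.equivFin.symm.sum_comp]

namespace QuadraticMap

variable {ι k R M N : Type*}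

theorem map_sum_eq_sum_add_sum_lt [CommRing R] [AddCommGroup M] [AddCommGroup N] [Module R M]
    [Module R N] [LinearOrder ι] (Q : QuadraticMap R M N) (s : Finset ι) (f : ι → M) :
    Q (∑ i ∈ s, f i) = ∑ i ∈ s, Q (f i) + ∑ i ∈ s, ∑ j ∈ s with i < j, polar Q (f i) (f j) := by
  have hlt : s.offDiag.filter (fun p => p.1 < p.2) = (s ×ˢ s).filter (fun p => p.1 < p.2) := by
    ext p
    simp only [Finset.mem_filter, Finset.mem_offDiag, Finset.mem_product]
    exact ⟨fun h => ⟨⟨h.1.1, h.1.2.1⟩, h.2⟩, fun h => ⟨⟨h.1.1, h.1.2, h.2.ne⟩, h.2⟩⟩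
  rw [Q.map_sum, Finset.sum_sym2_filter_not_isDiag, hlt, Finset.sum_filter, Finset.sum_product]
  simp only [Sym2.map_mk, polarSym2_sym2Mk, ← Finset.sum_filter]

theorem apply_apply_eq_of_one_tmul [CommRing k] [CommRing R] [Algebra k R] [AddCommGroup M]
    [Module k M] [AddCommGroup N] [Module R N] {P P' P'' : Type*} [AddCommGroup P] [Module R P]
    [AddCommGroup P'] [Module R P'] [AddCommGroup P''] [Module k P''] [Module R P'']
    [IsScalarTower k R P''] (Q : QuadraticMap R (R ⊗[k] M) N) (φ : N →ₗ[R] P →ₗ[R] P'')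
    (β : R ⊗[k] M →ₗ[R] P' →ₗ[R] P'') (γ : R ⊗[k] M →ₗ[R] P →ₗ[R] P')
    (h : ∀ m z, φ (Q (1 ⊗ₜ m)) z = β (1 ⊗ₜ m) (γ (1 ⊗ₜ m) z)) (x : R ⊗[k] M) (z : P) :
    φ (Q x) z = β x (γ x z) := by
  have hQ : (φ.flip z).compQuadraticMap Q =
      LinearMap.BilinMap.toQuadraticMap (β.compl₂ (γ.flip z)) :=
    baseChange_ext fun m => h m z
  exact congr($hQ x)

section BaseChange

variable [CommRing k] [CommRing R] [Algebra k R] [AddCommGroup M] [Module k M] [AddCommGroup N]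
  [Module k N]

variable (R) in
/-- By `baseChange_ext` the result does not depend on the chosen bilinear map. -/
noncomputable def baseChange [Module.Free k M]
    (Q : QuadraticMap k M N) : QuadraticMap R (R ⊗[k] M) (R ⊗[k] N) :=
  ((LinearMap.BilinMap.toQuadraticMap_surjective Q).choose.baseChange R).toQuadraticMap

variable [Module.Free k M] (Q : QuadraticMap k M N)

theorem baseChange_tmul (r : R) (m : M) : Q.baseChange R (r ⊗ₜ m) = (r * r) ⊗ₜ Q m := by
  rw [baseChange, LinearMap.BilinMap.toQuadraticMap_apply, LinearMap.BilinMap.baseChange_tmul,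
    ← LinearMap.BilinMap.toQuadraticMap_apply,
    (LinearMap.BilinMap.toQuadraticMap_surjective Q).choose_spec]

theorem polar_baseChange_tmul (r s : R) (m m' : M) :
    polar (Q.baseChange R) (r ⊗ₜ m) (s ⊗ₜ m') = (r * s) ⊗ₜ polar Q m m' := by
  have hB := (LinearMap.BilinMap.toQuadraticMap_surjective Q).choose_spec
  set B := (LinearMap.BilinMap.toQuadraticMap_surjective Q).choose
  conv_rhs => rw [← hB]
  rw [baseChange, LinearMap.BilinMap.polar_toQuadraticMap, LinearMap.BilinMap.polar_toQuadraticMap,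
    LinearMap.BilinMap.baseChange_tmul, LinearMap.BilinMap.baseChange_tmul, mul_comm s r, tmul_add]

theorem polarBilin_baseChange :
    polarBilin (Q.baseChange R) = (polarBilin Q).baseChange R := by
  ext m m'
  simp [polar_baseChange_tmul]

theorem baseChange_sum_tmul [LinearOrder ι] (s : Finset ι) (c : ι → R) (v : ι → M) :
    Q.baseChange R (∑ i ∈ s, c i ⊗ₜ v i) =
      ∑ i ∈ s, (c i * c i) ⊗ₜ Q (v i) +
        ∑ i ∈ s, ∑ j ∈ s with i < j, (c i * c j) ⊗ₜ polar Q (v i) (v j) := by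
  simp only [map_sum_eq_sum_add_sum_lt, baseChange_tmul, polar_baseChange_tmul]

end BaseChange

end QuadraticMap

theorem stmt11_general (k g0 g1 : Type*) [CommRing k]
    [AddCommGroup g0] [Module k g0] [AddCommGroup g1] [Module k g1]
    [Module.Free k g1]
    (b00 : g0 →ₗ[k] g0 →ₗ[k] g0) (b01 : g0 →ₗ[k] g1 →ₗ[k] g1)
    (b10 : g1 →ₗ[k] g0 →ₗ[k] g1) (b11 : g1 →ₗ[k] g1 →ₗ[k] g0)
    -- the 2-operation q on g
    (q : g1 → g0)
    (hq1 : ∀ (c : k) (v : g1), q (c • v) = (c * c) • q v)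
    (hq2 : ∀ v w : g1, q (v + w) = q v + b11 v w + q w)
    (hq3even : ∀ (v : g1) (x : g0), b00 (q v) x = b11 v (b10 v x))
    (hq3odd : ∀ (v z : g1), b01 (q v) z = b10 v (b11 v z))
    -- a commutative k-algebra R
    (R : Type*) [CommRing R] [Algebra k R]
    -- base-changed brackets, characterized on pure tensors
    (bR00 : (R ⊗[k] g0) →ₗ[R] (R ⊗[k] g0) →ₗ[R] (R ⊗[k] g0))
    (bR01 : (R ⊗[k] g0) →ₗ[R] (R ⊗[k] g1) →ₗ[R] (R ⊗[k] g1))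
    (bR10 : (R ⊗[k] g1) →ₗ[R] (R ⊗[k] g0) →ₗ[R] (R ⊗[k] g1))
    (bR11 : (R ⊗[k] g1) →ₗ[R] (R ⊗[k] g1) →ₗ[R] (R ⊗[k] g0))
    (hbR00 : ∀ (r s : R) (u w : g0), bR00 (r ⊗ₜ u) (s ⊗ₜ w) = (r * s) ⊗ₜ b00 u w)
    (hbR01 : ∀ (r s : R) (u : g0) (v : g1), bR01 (r ⊗ₜ u) (s ⊗ₜ v) = (r * s) ⊗ₜ b01 u v)
    (hbR10 : ∀ (r s : R) (v : g1) (u : g0), bR10 (r ⊗ₜ v) (s ⊗ₜ u) = (r * s) ⊗ₜ b10 v u)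
    (hbR11 : ∀ (r s : R) (v w : g1), bR11 (r ⊗ₜ v) (s ⊗ₜ w) = (r * s) ⊗ₜ b11 v w) :
    ∃! qR : (R ⊗[k] g1) → (R ⊗[k] g0),
      -- the defining formula, on arbitrary elements Σᵢ cᵢ ⊗ vᵢ
      (∀ (n : ℕ) (c : Fin n → R) (v : Fin n → g1),
        qR (∑ i, c i ⊗ₜ v i) =
          (∑ i, (c i * c i) ⊗ₜ q (v i)) +
          ∑ i, ∑ j ∈ Finset.univ.filter (fun j => i < j), (c i * c j) ⊗ₜ b11 (v i) (v j)) ∧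
      -- q_R is a 2-operation on R ⊗ g
      (∀ (r : R) (x : R ⊗[k] g1), qR (r • x) = (r * r) • qR x) ∧
      (∀ x y : R ⊗[k] g1, qR (x + y) = qR x + bR11 x y + qR y) ∧
      (∀ (x : R ⊗[k] g1) (z : R ⊗[k] g0), bR00 (qR x) z = bR11 x (bR10 x z)) ∧
      (∀ (x z : R ⊗[k] g1), bR01 (qR x) z = bR10 x (bR11 x z)) := by
  let Q : QuadraticMap k g1 g0 := ⟨q, hq1, b11, fun v w => by rw [hq2]; abel⟩
  have hpolar : ∀ v w, QuadraticMap.polar Q v w = b11 v w := fun v w => by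
    change q (v + w) - q v - q w = b11 v w
    rw [hq2]
    abel
  have hbR11' : (QuadraticMap.polarBilin Q).baseChange R = bR11 := by
    ext v w
    simp [hpolar, hbR11]
  have hform : ∀ (n : ℕ) (c : Fin n → R) (v : Fin n → g1),
      Q.baseChange R (∑ i, c i ⊗ₜ v i) =
        (∑ i, (c i * c i) ⊗ₜ q (v i)) +
        ∑ i, ∑ j ∈ Finset.univ.filter (fun j => i < j), (c i * c j) ⊗ₜ b11 (v i) (v j) := by
    intro n c v
    simp only [QuadraticMap.baseChange_sum_tmul, hpolar]
    rfl
  refine ⟨Q.baseChange R, ⟨hform, (Q.baseChange R).map_smul, fun x y => ?_, fun x z => ?_,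
    fun x z => ?_⟩, ?_⟩
  · rw [QuadraticMap.map_add (Q.baseChange R), ← QuadraticMap.polarBilin_apply_apply,
      QuadraticMap.polarBilin_baseChange, hbR11', add_right_comm]
  · refine QuadraticMap.apply_apply_eq_of_one_tmul _ bR00 bR11 bR10 (fun v z => ?_) x z
    rw [QuadraticMap.baseChange_tmul]
    induction z using TensorProduct.induction_on with
    | zero => simp
    | tmul s u => simp [hbR00, hbR10, hbR11, hq3even, Q]
    | add z z' hz hz' => simp only [map_add, hz, hz']
  · refine QuadraticMap.apply_apply_eq_of_one_tmul _ bR01 bR10 bR11 (fun v z => ?_) x z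
    rw [QuadraticMap.baseChange_tmul]
    induction z using TensorProduct.induction_on with
    | zero => simp
    | tmul s w => simp [hbR01, hbR10, hbR11, hq3odd, Q]
    | add z z' hz hz' => simp only [map_add, hz, hz']
  · rintro qR ⟨hform', -⟩
    funext x
    obtain ⟨n, c, v, rfl⟩ := TensorProduct.exists_eq_sum_fin_tmul x
    rw [hform', hform]

/-- Base change of a 2-operation.  Let g be a Lie superalgebra over k with a
2-operation q and k-free odd part, and R a commutative k-algebra.  Then there is
a unique map q_R on R ⊗ g₁ (independent of any choice of ordered basis) given by
the displayed formula on arbitrary finite sums Σ cᵢ⊗vᵢ, and q_R is a 2-operation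
on the base-changed R-Lie superalgebra R ⊗ g.  The base-changed brackets `bR**`
are characterized on pure tensors. -/
theorem stmt11 (k g0 g1 : Type*) [CommRing k]
    [AddCommGroup g0] [Module k g0] [AddCommGroup g1] [Module k g1]
    [Module.Free k g1]
    (b00 : g0 →ₗ[k] g0 →ₗ[k] g0) (b01 : g0 →ₗ[k] g1 →ₗ[k] g1)
    (b10 : g1 →ₗ[k] g0 →ₗ[k] g1) (b11 : g1 →ₗ[k] g1 →ₗ[k] g0)
    -- Lie superalgebra axioms
    (alt0 : ∀ u : g0, b00 u u = 0)
    (odd3 : ∀ v : g1, b01 (b11 v v) v = 0)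
    (antisym00 : ∀ u w : g0, b00 u w = - b00 w u)
    (antisym01 : ∀ (u : g0) (v : g1), b01 u v = - b10 v u)
    (sym11 : ∀ v w : g1, b11 v w = b11 w v)
    (jac000 : ∀ x y z : g0, b00 (b00 x y) z + b00 (b00 y z) x + b00 (b00 z x) y = 0)
    (jac001 : ∀ (x y : g0) (v : g1),
      b01 (b00 x y) v + b10 (b01 y v) x + b10 (b10 v x) y = 0)
    (jac011 : ∀ (x : g0) (v w : g1),
      b11 (b01 x v) w + b00 (b11 v w) x - b11 (b10 w x) v = 0)
    (jac111 : ∀ u v w : g1, b01 (b11 u v) w + b01 (b11 v w) u + b01 (b11 w u) v = 0)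
    -- the 2-operation q on g
    (q : g1 → g0)
    (hq1 : ∀ (c : k) (v : g1), q (c • v) = (c * c) • q v)
    (hq2 : ∀ v w : g1, q (v + w) = q v + b11 v w + q w)
    (hq3even : ∀ (v : g1) (x : g0), b00 (q v) x = b11 v (b10 v x))
    (hq3odd : ∀ (v z : g1), b01 (q v) z = b10 v (b11 v z))
    -- a commutative k-algebra R
    (R : Type*) [CommRing R] [Algebra k R]
    -- base-changed brackets, characterized on pure tensors
    (bR00 : (R ⊗[k] g0) →ₗ[R] (R ⊗[k] g0) →ₗ[R] (R ⊗[k] g0))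
    (bR01 : (R ⊗[k] g0) →ₗ[R] (R ⊗[k] g1) →ₗ[R] (R ⊗[k] g1))
    (bR10 : (R ⊗[k] g1) →ₗ[R] (R ⊗[k] g0) →ₗ[R] (R ⊗[k] g1))
    (bR11 : (R ⊗[k] g1) →ₗ[R] (R ⊗[k] g1) →ₗ[R] (R ⊗[k] g0))
    (hbR00 : ∀ (r s : R) (u w : g0), bR00 (r ⊗ₜ u) (s ⊗ₜ w) = (r * s) ⊗ₜ b00 u w)
    (hbR01 : ∀ (r s : R) (u : g0) (v : g1), bR01 (r ⊗ₜ u) (s ⊗ₜ v) = (r * s) ⊗ₜ b01 u v)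
    (hbR10 : ∀ (r s : R) (v : g1) (u : g0), bR10 (r ⊗ₜ v) (s ⊗ₜ u) = (r * s) ⊗ₜ b10 v u)
    (hbR11 : ∀ (r s : R) (v w : g1), bR11 (r ⊗ₜ v) (s ⊗ₜ w) = (r * s) ⊗ₜ b11 v w) :
    ∃! qR : (R ⊗[k] g1) → (R ⊗[k] g0),
      -- the defining formula, on arbitrary elements Σᵢ cᵢ ⊗ vᵢ
      (∀ (n : ℕ) (c : Fin n → R) (v : Fin n → g1),
        qR (∑ i, c i ⊗ₜ v i) =
          (∑ i, (c i * c i) ⊗ₜ q (v i)) +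
          ∑ i, ∑ j ∈ Finset.univ.filter (fun j => i < j), (c i * c j) ⊗ₜ b11 (v i) (v j)) ∧
      -- q_R is a 2-operation on R ⊗ g
      (∀ (r : R) (x : R ⊗[k] g1), qR (r • x) = (r * r) • qR x) ∧
      (∀ x y : R ⊗[k] g1, qR (x + y) = qR x + bR11 x y + qR y) ∧
      (∀ (x : R ⊗[k] g1) (z : R ⊗[k] g0), bR00 (qR x) z = bR11 x (bR10 x z)) ∧
      (∀ (x z : R ⊗[k] g1), bR01 (qR x) z = bR10 x (bR11 x z)) :=
  stmt11_general k g0 g1 b00 b01 b10 b11 q hq1 hq2 hq3even hq3odd R bR00 bR01 bR10 bR11 hbR00 hbR01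
    hbR10 hbR11
end

section
/- (Rigidity of split comodule algebra maps.) Let A be a split affine Hopf superalgebra over a 2-torsion free ring, C := Ā, W := W^A, and let ψ : A → C ⊗ Λ(W) be a counit-preserving map of left C-comodule superalgebras. If the composite (ε ⊗ ϖ)∘ψ : A → W (ϖ : Λ(W) → W the canonical projection) coincides with the canonical projection A → A₁/A₀⁺A₁ = W, then ψ is an isomorphism. -/
/-!
Composing `ψ` with the inverse of the splitting `χ` reduces the claim to an endomorphism `φ` of
`B = C ⊗ Λ(W)` that is multiplicative, `C`-colinear and compatible with `ε ⊗ ε_Λ` and `ε ⊗ ϖ`.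
A colinear endomorphism of the cofree comodule `C ⊗ M` is determined by its composite with
`ε ⊗ id`, so `φ` acts as the identity on the components `C ⊗ k` and `C ⊗ W`. Since `B` is
generated by these components, `φ - 1` raises the filtration `C ⊗ Λ^{≥ i}(W)` by one. As `W` is
finitely generated this filtration terminates, so `φ - 1` is nilpotent and `φ` is invertible.
-/

open TensorProduct LinearMap

namespace Submodule

section powFiltration

variable {R S : Type*} [CommSemiring R] [Semiring S] [Algebra R S] (M : Submodule R S)

def powFiltration (i : ℕ) : Submodule R S :=
  ⨆ (j) (_ : i ≤ j), M ^ j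

variable {M}

theorem pow_le_powFiltration {i j : ℕ} (h : i ≤ j) : M ^ j ≤ M.powFiltration i :=
  le_iSup₂_of_le j h le_rfl

theorem powFiltration_antitone : Antitone M.powFiltration := fun _ _ h =>
  iSup₂_le fun _ hj => pow_le_powFiltration (h.trans hj)

theorem powFiltration_mul_le (i j : ℕ) :
    M.powFiltration i * M.powFiltration j ≤ M.powFiltration (i + j) := by
  simp only [powFiltration, iSup_mul, mul_iSup, ← pow_add]
  exact iSup₂_le fun _ _ => iSup₂_le fun _ _ => pow_le_powFiltration (by omega)

theorem powFiltration_zero : M.powFiltration 0 = ⨆ j, M ^ j := by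
  simp [powFiltration]

theorem powFiltration_eq_bot {n : ℕ} (h : M ^ n = ⊥) : M.powFiltration n = ⊥ :=
  eq_bot_iff.2 <| iSup₂_le fun j hj => by
    rw [← Nat.add_sub_cancel' hj, pow_add, h, bot_mul]

end powFiltration

section baseChange

variable {R A S : Type*} [CommSemiring R] [CommSemiring A] [Algebra R A] [Semiring S]
  [Algebra R S]

theorem baseChange_mul_le (P Q : Submodule R S) :
    P.baseChange A * Q.baseChange A ≤ (P * Q).baseChange A := by
  rw [baseChange_eq_span, baseChange_eq_span, span_mul_span, span_le]
  rintro _ ⟨_, ⟨p, hp, rfl⟩, _, ⟨q, hq, rfl⟩, rfl⟩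
  simpa [Algebra.TensorProduct.tmul_mul_tmul] using
    tmul_mem_baseChange_of_mem 1 (mul_mem_mul hp hq)

theorem lTensor_mem_baseChange {P : Submodule R S} {D : S →ₗ[R] S} (hD : ∀ x, D x ∈ P)
    (b : A ⊗[R] S) : lTensor A D b ∈ P.baseChange A :=
  ⟨lTensor A (D.codRestrict P hD) b, by rw [baseChange_eq_ltensor, ← lTensor_comp_apply]; rfl⟩

end baseChange

end Submodule

theorem Module.End.bijective_of_sub_mem_succ {R M : Type*} [Semiring R] [AddCommGroup M]
    [Module R M] {f : Module.End R M} {F : ℕ → Submodule R M} {n : ℕ} (h0 : F 0 = ⊤)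
    (hn : F n = ⊥) (hf : ∀ i, ∀ x ∈ F i, f x - x ∈ F (i + 1)) : Function.Bijective f := by
  have hpow : ∀ m x, ((f - 1) ^ m) x ∈ F m := by
    intro m
    induction m with
    | zero => simp [h0]
    | succ m ih => intro x; rw [pow_succ', Module.End.mul_apply]; exact hf m _ (ih x)
  have hnil : IsNilpotent (f - 1) := ⟨n, LinearMap.ext fun x => by simpa [hn] using hpow n x⟩
  simpa using (Module.End.isUnit_iff f).1 (by simpa using hnil.isUnit_add_one)

section FiltrationRaising

open Submodule

variable {k C S : Type*} [CommRing k] [CommRing C] [Algebra k C] [Ring S] [Algebra k S]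
  {M : Submodule k S} {φ : C ⊗[k] S →ₗ[k] C ⊗[k] S}

theorem mul_mem_baseChange_powFiltration {i j : ℕ} {x y : C ⊗[k] S}
    (hx : x ∈ (M.powFiltration i).baseChange C) (hy : y ∈ (M.powFiltration j).baseChange C) :
    x * y ∈ (M.powFiltration (i + j)).baseChange C :=
  baseChange_mono C (powFiltration_mul_le i j) (baseChange_mul_le _ _ (mul_mem_mul hx hy))

theorem mem_baseChange_powFiltration_of_le {i j : ℕ} (h : i ≤ j) {x : C ⊗[k] S}
    (hx : x ∈ (M.powFiltration j).baseChange C) : x ∈ (M.powFiltration i).baseChange C :=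
  baseChange_mono C (powFiltration_antitone h) hx

theorem sub_tmul_mem_baseChange_powFiltration_of_mem_pow
    (hmul : ∀ u v, φ (u * v) = φ u * φ v)
    (h0 : ∀ c : C, φ (c ⊗ₜ 1) - c ⊗ₜ 1 ∈ (M.powFiltration 1).baseChange C)
    (h1 : ∀ m ∈ M, φ (1 ⊗ₜ m) - 1 ⊗ₜ m ∈ (M.powFiltration 2).baseChange C)
    {j : ℕ} {y : S} (hy : y ∈ M ^ j) (c : C) :
    φ (c ⊗ₜ y) - c ⊗ₜ y ∈ (M.powFiltration (j + 1)).baseChange C := by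
  induction hy using Submodule.pow_induction_on_left' generalizing c with
  | algebraMap r =>
    rw [Algebra.algebraMap_eq_smul_one, tmul_smul, map_smul, ← smul_sub]
    exact smul_of_tower_mem _ r (h0 c)
  | add x y i _ _ ihx ihy =>
    rw [tmul_add, map_add, add_sub_add_comm]
    exact add_mem (ihx c) (ihy c)
  | mem_mul m hm i x hx ih =>
    have hm1 : (1 : C) ⊗ₜ m ∈ (M.powFiltration 1).baseChange C :=
      tmul_mem_baseChange_of_mem _ (pow_le_powFiltration le_rfl (by rwa [pow_one]))
    have hx0 : c ⊗ₜ x ∈ (M.powFiltration i).baseChange C :=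
      tmul_mem_baseChange_of_mem _ (pow_le_powFiltration le_rfl hx)
    have expand : ∀ a b : C ⊗[k] S,
        φ (a * b) - a * b = a * (φ b - b) + (φ a - a) * b + (φ a - a) * (φ b - b) := by
      intro a b; rw [hmul]; noncomm_ring
    rw [show c ⊗ₜ[k] (m * x) = (1 ⊗ₜ m) * (c ⊗ₜ x) by
      rw [Algebra.TensorProduct.tmul_mul_tmul, one_mul], expand]
    refine add_mem (add_mem ?_ ?_) ?_
    · exact mem_baseChange_powFiltration_of_le (by omega)
        (mul_mem_baseChange_powFiltration hm1 (ih c))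
    · exact mem_baseChange_powFiltration_of_le (by omega)
        (mul_mem_baseChange_powFiltration (h1 m hm) hx0)
    · exact mem_baseChange_powFiltration_of_le (by omega)
        (mul_mem_baseChange_powFiltration (h1 m hm) (ih c))

theorem sub_mem_baseChange_powFiltration_succ
    (hmul : ∀ u v, φ (u * v) = φ u * φ v)
    (h0 : ∀ c : C, φ (c ⊗ₜ 1) - c ⊗ₜ 1 ∈ (M.powFiltration 1).baseChange C)
    (h1 : ∀ m ∈ M, φ (1 ⊗ₜ m) - 1 ⊗ₜ m ∈ (M.powFiltration 2).baseChange C)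
    {i : ℕ} {x : C ⊗[k] S} (hx : x ∈ (M.powFiltration i).baseChange C) :
    φ x - x ∈ (M.powFiltration (i + 1)).baseChange C := by
  obtain ⟨t, rfl⟩ := hx
  induction t using TensorProduct.induction_on with
  | zero => simp
  | add t t' ht ht' => rw [map_add, map_add, add_sub_add_comm]; exact add_mem ht ht'
  | tmul c y =>
    obtain ⟨y, hy⟩ := y
    suffices M.powFiltration i ≤ (((M.powFiltration (i + 1)).baseChange C).restrictScalars k).comap
        (φ ∘ₗ TensorProduct.mk k C S c - TensorProduct.mk k C S c) from this hy
    exact iSup₂_le fun j hj z hz => mem_baseChange_powFiltration_of_le (by omega)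
      (sub_tmul_mem_baseChange_powFiltration_of_mem_pow hmul h0 h1 hz c)

end FiltrationRaising

namespace ExteriorAlgebra

variable {R M : Type*} [CommRing R] [AddCommGroup M] [Module R M]

theorem exists_exteriorPower_eq_bot [Module.Finite R M] : ∃ n, ⋀[R]^n M = ⊥ := by
  obtain ⟨n, s, hs⟩ := Module.Finite.exists_fin (R := R) (M := M)
  refine ⟨n + 1, ?_⟩
  rw [← exteriorPower.ιMulti_span_fixedDegree_of_span_eq_top R (n + 1) M hs,
    Submodule.span_eq_bot]
  rintro _ ⟨a, ha, rfl⟩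
  choose g hg using fun i => ha ⟨i, rfl⟩
  obtain ⟨i, j, hij, hne⟩ := Function.not_injective_iff.1 fun hinj =>
    by simpa using Fintype.card_le_of_injective g hinj
  exact (ιMulti R (n + 1)).map_eq_zero_of_eq a (by rw [← hg i, ← hg j, hij]) hne

theorem iSup_exteriorPower_eq_top : ⨆ i, ⋀[R]^i M = ⊤ :=
  (DirectSum.Decomposition.isInternal fun i : ℕ => ⋀[R]^i M).submodule_iSup_eq_top

@[simp]
theorem algebraMapInv_ι (m : M) : algebraMapInv (ι R m) = 0 := by
  simp [algebraMapInv]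

@[simp]
theorem ιInv_algebraMap (r : R) : ιInv (algebraMap R (ExteriorAlgebra R M) r) = 0 := by
  -- the auxiliary instances through which `ιInv` is defined
  let : Module Rᵐᵒᵖ M := Module.compHom _ ((RingHom.id R).fromOpposite mul_comm)
  have : IsCentralScalar R M := ⟨fun r m => rfl⟩
  simp [ιInv, TrivSqZeroExt.algebraMap_eq_inl']

theorem algebraMapInv_eq_zero_of_mem {n : ℕ} {x : ExteriorAlgebra R M}
    (hx : x ∈ ⋀[R]^(n + 1) M) : algebraMapInv x = 0 := by
  rw [exteriorPower, pow_succ'] at hx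
  induction hx using Submodule.mul_induction_on' with
  | mem_mul_mem m hm y _ =>
    obtain ⟨w, rfl⟩ := hm
    simp
  | add _ _ _ _ ha hb => rw [map_add, ha, hb, add_zero]

theorem ιInv_eq_zero_of_mem {n : ℕ} {x : ExteriorAlgebra R M} (hx : x ∈ ⋀[R]^(n + 2) M) :
    ιInv x = 0 := by
  let : Module Rᵐᵒᵖ M := Module.compHom _ ((RingHom.id R).fromOpposite mul_comm)
  have : IsCentralScalar R M := ⟨fun r m => rfl⟩
  rw [exteriorPower, pow_succ', pow_succ', ← mul_assoc] at hx
  induction hx using Submodule.mul_induction_on' with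
  | mem_mul_mem m hm y _ =>
    induction hm using Submodule.mul_induction_on' with
    | mem_mul_mem a ha b hb =>
      obtain ⟨v, rfl⟩ := ha
      obtain ⟨w, rfl⟩ := hb
      simp [ιInv]
    | add _ _ _ _ ha hb => rw [add_mul, map_add, ha, hb, add_zero]
  | add _ _ _ _ ha hb => rw [map_add, ha, hb, add_zero]

theorem sub_algebraMap_sub_ι_mem_powFiltration_two (x : ExteriorAlgebra R M) :
    x - algebraMap R _ (algebraMapInv x) - ι R (ιInv x) ∈
      (LinearMap.range (ι R)).powFiltration 2 := by
  let D : ExteriorAlgebra R M →ₗ[R] ExteriorAlgebra R M :=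
    LinearMap.id - Algebra.linearMap R _ ∘ₗ algebraMapInv.toLinearMap - ι R ∘ₗ ιInv
  suffices ⊤ ≤ ((LinearMap.range (ι R)).powFiltration 2).comap D from this trivial
  rw [← iSup_exteriorPower_eq_top]
  refine iSup_le fun j y hy => ?_
  match j, hy with
  | 0, hy =>
    obtain ⟨r, rfl⟩ := Submodule.mem_one.1 hy
    simp [D]
  | 1, hy =>
    obtain ⟨w, rfl⟩ := (pow_one (LinearMap.range (ι R (M := M)))).le hy
    simp [D, ι_leftInverse w]
  | n + 2, hy =>
    have hε := algebraMapInv_eq_zero_of_mem (n := n + 1) hy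
    simpa [D, hε, ιInv_eq_zero_of_mem hy] using Submodule.pow_le_powFiltration (by omega) hy

variable {C : Type*} [CommRing C] [Algebra R C]

theorem mem_baseChange_powFiltration_two {b : C ⊗[R] ExteriorAlgebra R M}
    (hε : lTensor C algebraMapInv.toLinearMap b = 0) (hι : lTensor C ιInv b = 0) :
    b ∈ ((LinearMap.range (ι R)).powFiltration 2).baseChange C := by
  have h := Submodule.lTensor_mem_baseChange (A := C) (D := LinearMap.id -
    Algebra.linearMap R _ ∘ₗ algebraMapInv.toLinearMap - ι R ∘ₗ ιInv (M := M))
    sub_algebraMap_sub_ι_mem_powFiltration_two b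
  simpa [lTensor_sub, lTensor_comp_apply, hε, hι] using h

theorem bijective_of_lTensor_comp_eq [Module.Finite R M]
    {φ : C ⊗[R] ExteriorAlgebra R M →ₗ[R] C ⊗[R] ExteriorAlgebra R M}
    (hmul : ∀ u v, φ (u * v) = φ u * φ v)
    (hε : lTensor C algebraMapInv.toLinearMap ∘ₗ φ = lTensor C algebraMapInv.toLinearMap)
    (hι : lTensor C ιInv ∘ₗ φ = lTensor C ιInv) : Function.Bijective φ := by
  have h2 : ∀ x, φ x - x ∈ ((LinearMap.range (ι R)).powFiltration 2).baseChange C := fun x =>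
    mem_baseChange_powFiltration_two (by simp [← comp_apply, hε]) (by simp [← comp_apply, hι])
  obtain ⟨n, hn⟩ := exists_exteriorPower_eq_bot (R := R) (M := M)
  refine Module.End.bijective_of_sub_mem_succ
    (F := fun i => (((LinearMap.range (ι R)).powFiltration i).baseChange C).restrictScalars R)
    (n := n) ?_ ?_ fun i x hx => sub_mem_baseChange_powFiltration_succ hmul
      (fun c => mem_baseChange_powFiltration_of_le one_le_two (h2 _)) (fun m _ => h2 _) hx
  · rw [Submodule.powFiltration_zero, iSup_exteriorPower_eq_top, Submodule.baseChange_top]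
    rfl
  · simp [Submodule.powFiltration_eq_bot hn]

end ExteriorAlgebra

section CofreeComodule

variable {k C M V : Type*} [CommRing k] [AddCommGroup C] [Module k C] [Coalgebra k C]
  [AddCommGroup M] [Module k M] [AddCommGroup V] [Module k V]

theorem lTensor_counit_map_comp_coaction (t : M →ₗ[k] V) :
    lTensor C ((TensorProduct.lid k V).toLinearMap ∘ₗ map Coalgebra.counit t) ∘ₗ
      (TensorProduct.assoc k C C M).toLinearMap ∘ₗ rTensor M (Coalgebra.comul (R := k)) =
    lTensor C t := by
  refine TensorProduct.ext' fun c m => ?_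
  have key : ∀ u : C ⊗[k] C,
      lTensor C ((TensorProduct.lid k V).toLinearMap ∘ₗ map Coalgebra.counit t)
        (TensorProduct.assoc k C C M (u ⊗ₜ m)) =
      lTensor C (toSpanSingleton k V (t m)) (lTensor C Coalgebra.counit u) := by
    intro u
    induction u using TensorProduct.induction_on with
    | zero => simp
    | tmul c₁ c₂ => simp
    | add u₁ u₂ h₁ h₂ => rw [add_tmul, map_add, map_add, map_add, map_add, h₁, h₂]
  simp [key]

theorem lTensor_comp_eq_of_coaction_comp_eq {φ : C ⊗[k] M →ₗ[k] C ⊗[k] M}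
    (hφ : ((TensorProduct.assoc k C C M).toLinearMap ∘ₗ rTensor M (Coalgebra.comul (R := k))) ∘ₗ
      φ = lTensor C φ ∘ₗ (TensorProduct.assoc k C C M).toLinearMap ∘ₗ
        rTensor M (Coalgebra.comul (R := k)))
    (t : M →ₗ[k] V)
    (ht : ((TensorProduct.lid k V).toLinearMap ∘ₗ map Coalgebra.counit t) ∘ₗ φ =
      (TensorProduct.lid k V).toLinearMap ∘ₗ map Coalgebra.counit t) :
    lTensor C t ∘ₗ φ = lTensor C t := by
  rw [← lTensor_counit_map_comp_coaction t, comp_assoc, hφ, ← comp_assoc, ← lTensor_comp, ht]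

end CofreeComodule

theorem stmt16_general (k C A W : Type*) [CommRing k]
    [CommRing C] [HopfAlgebra k C]
    [Ring A] [Algebra k A]
    [AddCommGroup W] [Module k W] [Module.Finite k W]
    -- counit and left C-comodule algebra structure on A
    (εA : A →ₐ[k] k) (ρA : A →ₗ[k] C ⊗[k] A)
    -- the canonical projection A → A₁/A₀⁺A₁ = W
    (pW : A →ₗ[k] W) :
    -- abbreviations: coaction ρB, counit εB and W-projection projW on B = C ⊗ Λ(W)
    ∀ (ρB : C ⊗[k] ExteriorAlgebra k W →ₗ[k] C ⊗[k] (C ⊗[k] ExteriorAlgebra k W))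
      (εB : C ⊗[k] ExteriorAlgebra k W →ₗ[k] k)
      (projW : C ⊗[k] ExteriorAlgebra k W →ₗ[k] W),
      ρB = (TensorProduct.assoc k C C (ExteriorAlgebra k W)).toLinearMap ∘ₗ
        (LinearMap.rTensor (ExteriorAlgebra k W) (Coalgebra.comul (R := k) (A := C))) →
      εB = (TensorProduct.lid k k).toLinearMap ∘ₗ
        (TensorProduct.map (Coalgebra.counit (R := k) (A := C))
          (ExteriorAlgebra.algebraMapInv).toLinearMap) →
      projW = (TensorProduct.lid k W).toLinearMap ∘ₗ
        (TensorProduct.map (Coalgebra.counit (R := k) (A := C)) ExteriorAlgebra.ιInv) →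
    -- splitness of A: some isomorphism χ of left C-comodule algebras,
    -- counit-preserving and compatible with the canonical projection pW
    (∃ χ : A →ₗ[k] C ⊗[k] ExteriorAlgebra k W,
      Function.Bijective χ ∧
      (∀ a b : A, χ (a * b) = χ a * χ b) ∧ χ 1 = 1 ∧
      ρB ∘ₗ χ = (LinearMap.lTensor C χ) ∘ₗ ρA ∧
      (∀ a : A, εB (χ a) = εA a) ∧
      projW ∘ₗ χ = pW) →
    -- then any counit-preserving comodule algebra map ψ compatible with pW
    -- is automatically an isomorphism
    ∀ ψ : A →ₗ[k] C ⊗[k] ExteriorAlgebra k W,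
      (∀ a b : A, ψ (a * b) = ψ a * ψ b) → ψ 1 = 1 →
      ρB ∘ₗ ψ = (LinearMap.lTensor C ψ) ∘ₗ ρA →
      (∀ a : A, εB (ψ a) = εA a) →
      projW ∘ₗ ψ = pW →
      Function.Bijective ψ := by
  rintro ρB εB projW hρB hεB hprojW ⟨χ, hχ, hχmul, -, hχρ, hχε, hχW⟩ ψ hψmul - hψρ hψε hψW
  let φ := ψ ∘ₗ (LinearEquiv.ofBijective χ hχ).symm.toLinearMap
  have hφχ : ∀ a, φ (χ a) = ψ a := fun a =>
    congrArg ψ ((LinearEquiv.ofBijective χ hχ).symm_apply_apply a)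
  have hψ : φ ∘ₗ χ = ψ := LinearMap.ext hφχ
  have hmul : ∀ u v, φ (u * v) = φ u * φ v := by
    intro u v
    obtain ⟨a, rfl⟩ := hχ.2 u
    obtain ⟨b, rfl⟩ := hχ.2 v
    rw [← hχmul, hφχ, hφχ, hφχ, hψmul]
  have hρ : ρB ∘ₗ φ = lTensor C φ ∘ₗ ρB := (cancel_right hχ.2).1 <| by
    rw [comp_assoc, hψ, hψρ, comp_assoc, hχρ, ← comp_assoc, ← lTensor_comp, hψ]
  have hε : εB ∘ₗ φ = εB := (cancel_right hχ.2).1 <| LinearMap.ext fun a => by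
    simp only [comp_apply, hφχ, hψε, hχε]
  have hW : projW ∘ₗ φ = projW := (cancel_right hχ.2).1 <| by rw [comp_assoc, hψ, hψW, hχW]
  subst hρB hεB hprojW
  rw [← hψ, coe_comp]
  exact (ExteriorAlgebra.bijective_of_lTensor_comp_eq hmul
    (lTensor_comp_eq_of_coaction_comp_eq hρ _ hε)
    (lTensor_comp_eq_of_coaction_comp_eq hρ _ hW)).comp hχ

/-- Rigidity of split comodule algebra maps.  Let A be a split affine Hopf
superalgebra over a 2-torsion free ring, C := Ā a commutative Hopf algebra,
W := W^A finite free, and B := C ⊗ Λ(W) with its natural left C-comodule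
algebra structure and counit.  If ψ : A → C ⊗ Λ(W) is a counit-preserving
map of left C-comodule algebras such that (ε ⊗ ϖ)∘ψ equals the canonical
projection pW : A → W (splitness being witnessed by some isomorphism χ with
the same properties), then ψ is an isomorphism. -/
theorem stmt16 (k C A W : Type*) [CommRing k]
    (h2k : ∀ a : k, 2 * a = 0 → a = 0)
    [CommRing C] [HopfAlgebra k C]
    [Ring A] [Algebra k A]
    [AddCommGroup W] [Module k W] [Module.Finite k W] [Module.Free k W]
    -- counit and left C-comodule algebra structure on A
    (εA : A →ₐ[k] k) (ρA : A →ₗ[k] C ⊗[k] A)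
    (hρA1 : ρA 1 = 1 ⊗ₜ 1)
    (hρAmul : ∀ a b : A, ρA (a * b) = ρA a * ρA b)
    (hρAcounit : ∀ a : A,
      (TensorProduct.lid k A)
        ((LinearMap.rTensor A (Coalgebra.counit (R := k) (A := C))) (ρA a)) = a)
    -- the canonical projection A → A₁/A₀⁺A₁ = W
    (pW : A →ₗ[k] W) :
    -- abbreviations: coaction ρB, counit εB and W-projection projW on B = C ⊗ Λ(W)
    ∀ (ρB : C ⊗[k] ExteriorAlgebra k W →ₗ[k] C ⊗[k] (C ⊗[k] ExteriorAlgebra k W))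
      (εB : C ⊗[k] ExteriorAlgebra k W →ₗ[k] k)
      (projW : C ⊗[k] ExteriorAlgebra k W →ₗ[k] W),
      ρB = (TensorProduct.assoc k C C (ExteriorAlgebra k W)).toLinearMap ∘ₗ
        (LinearMap.rTensor (ExteriorAlgebra k W) (Coalgebra.comul (R := k) (A := C))) →
      εB = (TensorProduct.lid k k).toLinearMap ∘ₗ
        (TensorProduct.map (Coalgebra.counit (R := k) (A := C))
          (ExteriorAlgebra.algebraMapInv).toLinearMap) →
      projW = (TensorProduct.lid k W).toLinearMap ∘ₗ
        (TensorProduct.map (Coalgebra.counit (R := k) (A := C)) ExteriorAlgebra.ιInv) →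
    -- splitness of A: some isomorphism χ of left C-comodule algebras,
    -- counit-preserving and compatible with the canonical projection pW
    (∃ χ : A →ₗ[k] C ⊗[k] ExteriorAlgebra k W,
      Function.Bijective χ ∧
      (∀ a b : A, χ (a * b) = χ a * χ b) ∧ χ 1 = 1 ∧
      ρB ∘ₗ χ = (LinearMap.lTensor C χ) ∘ₗ ρA ∧
      (∀ a : A, εB (χ a) = εA a) ∧
      projW ∘ₗ χ = pW) →
    -- then any counit-preserving comodule algebra map ψ compatible with pW
    -- is automatically an isomorphism
    ∀ ψ : A →ₗ[k] C ⊗[k] ExteriorAlgebra k W,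
      (∀ a b : A, ψ (a * b) = ψ a * ψ b) → ψ 1 = 1 →
      ρB ∘ₗ ψ = (LinearMap.lTensor C ψ) ∘ₗ ρA →
      (∀ a : A, εB (ψ a) = εA a) →
      projW ∘ₗ ψ = pW →
      Function.Bijective ψ :=
  stmt16_general k C A W εA ρA pW
end

section
/- Let C be a commutative Hopf algebra over a 2-torsion free ring k which is k-flat, let g be a Lie superalgebra with g₀ ⊆ k-flat and odd part a left C-comodule via v ↦ Σᵢ cᵢ⊗vᵢ, such that the super-bracket g₁⊗g₁ → g₀ is C-colinear. Then the coaction of the unique half-square satisfies ρ((1/2)[v,v]) = Σᵢ cᵢ² ⊗ (1/2)[vᵢ,vᵢ] + Σ_{i<j} cᵢcⱼ ⊗ [vᵢ,vⱼ], and consequently the element v² − (1/2)[v,v] generates a C-costable submodule: ρ(v² − (1/2)[v,v]) = Σᵢ cᵢ² ⊗ (vᵢ² − (1/2)[vᵢ,vᵢ]) + Σ_{i<j} cᵢcⱼ ⊗ (vᵢvⱼ + vⱼvᵢ − [vᵢ,vⱼ]) in C ⊗ H, where H = J ⋉ T(g₁). -/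
/-!
Since ρ₀ is linear and the bracket is colinear, `2 • ρ₀ (½[v,v]) = ρ₀ [v,v] = Σᵢⱼ cᵢcⱼ ⊗ [vᵢ,vⱼ]`,
which by symmetry of the bracket and commutativity of `C` is twice the claimed right-hand side.
As `C ⊗ g₀` is flat over the 2-torsion free ring `k`, the factor 2 cancels. The formula in `H`
follows by expanding `ρ(v)²` in the comodule algebra `C ⊗ H` and splitting the double sum into
its diagonal and off-diagonal parts.
-/

open TensorProduct Finset

theorem Finset.sum_sum_eq_sum_diag_add_sum_lt {ι M : Type*} [Fintype ι] [LinearOrder ι]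
    [AddCommMonoid M] (f : ι → ι → M) :
    ∑ i, ∑ j, f i j =
      ∑ i, f i i + ∑ i, ∑ j ∈ univ.filter (fun j => i < j), (f i j + f j i) := by
  have hrow : ∀ i, ∑ j, f i j = f i i + ∑ j ∈ univ.filter (fun j => i < j), f i j
      + ∑ j ∈ univ.filter (fun j => j < i), f i j := fun i => by
    have hsplit : ∀ j, f i j = (if i = j then f i j else 0) + (if i < j then f i j else 0)
        + (if j < i then f i j else 0) := fun j => by
      rcases lt_trichotomy i j with h | rfl | h
      · simp [h, h.ne, h.not_gt]
      · simp
      · simp [h, h.ne', h.not_gt]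
    rw [sum_congr rfl fun j _ => hsplit j]
    simp only [sum_add_distrib, sum_ite_eq, mem_univ, if_true, sum_filter]
  have hlower : ∑ i, ∑ j ∈ univ.filter (fun j => j < i), f i j
      = ∑ i, ∑ j ∈ univ.filter (fun j => i < j), f j i := by
    simp only [sum_filter]; exact sum_comm
  simp only [hrow, sum_add_distrib, hlower, add_assoc]

theorem coaction_bracket_eq_sum {k C L V : Type*} [CommSemiring k] [Semiring C] [Algebra k C]
    [AddCommMonoid L] [Module k L] [AddCommMonoid V] [Module k V]
    {b : V →ₗ[k] V →ₗ[k] L} {ρ0 : L →ₗ[k] C ⊗[k] L} {ρ1 : V →ₗ[k] C ⊗[k] V}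
    (hcolin : ρ0 ∘ₗ TensorProduct.lift b =
      (TensorProduct.map (LinearMap.mul' k C) (TensorProduct.lift b)) ∘ₗ
        (TensorProduct.tensorTensorTensorComm k C V C V).toLinearMap ∘ₗ
          (TensorProduct.map ρ1 ρ1))
    {ι κ : Type*} [Fintype ι] [Fintype κ] {v w : V} {c : ι → C} {vv : ι → V}
    {d : κ → C} {ww : κ → V}
    (hv : ρ1 v = ∑ i, c i ⊗ₜ vv i) (hw : ρ1 w = ∑ j, d j ⊗ₜ ww j) :
    ρ0 (b v w) = ∑ i, ∑ j, (c i * d j) ⊗ₜ b (vv i) (ww j) := by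
  have hvw := LinearMap.congr_fun hcolin (v ⊗ₜ w)
  simp only [LinearMap.comp_apply, lift.tmul, map_tmul, LinearEquiv.coe_coe, hv, hw] at hvw
  rw [hvw, sum_tmul]
  simp only [tmul_sum, map_sum, tensorTensorTensorComm_tmul, map_tmul,
    LinearMap.mul'_apply, lift.tmul]

theorem coaction_half_square {k C L V : Type*} [CommRing k] [CommRing C] [Algebra k C]
    [Module.Flat k C] [AddCommGroup L] [Module k L] [Module.Flat k L]
    [AddCommGroup V] [Module k V]
    {b : V →ₗ[k] V →ₗ[k] L} {ρ0 : L →ₗ[k] C ⊗[k] L} {ρ1 : V →ₗ[k] C ⊗[k] V}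
    (h2k : ∀ a : k, 2 * a = 0 → a = 0) (hsym : ∀ v w : V, b v w = b w v)
    {h : V → L} (hhalf : ∀ v : V, (2 : k) • h v = b v v)
    (hcolin : ρ0 ∘ₗ TensorProduct.lift b =
      (TensorProduct.map (LinearMap.mul' k C) (TensorProduct.lift b)) ∘ₗ
        (TensorProduct.tensorTensorTensorComm k C V C V).toLinearMap ∘ₗ
          (TensorProduct.map ρ1 ρ1))
    {ι : Type*} [Fintype ι] [LinearOrder ι] {c : ι → C} {vv : ι → V} {v : V}
    (hv : ρ1 v = ∑ i, c i ⊗ₜ vv i) :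
    ρ0 (h v) = ∑ i, (c i * c i) ⊗ₜ h (vv i) +
      ∑ i, ∑ j ∈ univ.filter (fun j => i < j), (c i * c j) ⊗ₜ b (vv i) (vv j) := by
  have hreg : IsSMulRegular (C ⊗[k] L) (2 : k) :=
    Module.Flat.isSMulRegular_of_nonZeroDivisors (M := C ⊗[k] L)
      (mem_nonZeroDivisors_iff_left.mpr h2k)
  apply hreg
  calc (2 : k) • ρ0 (h v) = ρ0 (b v v) := by rw [← map_smul, hhalf]
    _ = ∑ i, ∑ j, (c i * c j) ⊗ₜ b (vv i) (vv j) := coaction_bracket_eq_sum hcolin hv hv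
    _ = ∑ i, (c i * c i) ⊗ₜ b (vv i) (vv i) + ∑ i, ∑ j ∈ univ.filter (fun j => i < j),
          ((c i * c j) ⊗ₜ b (vv i) (vv j) + (c j * c i) ⊗ₜ b (vv j) (vv i)) :=
      sum_sum_eq_sum_diag_add_sum_lt fun i j => (c i * c j) ⊗ₜ b (vv i) (vv j)
    _ = _ := by
      simp only [smul_add, smul_sum, ← tmul_smul, hhalf]
      simp only [two_smul, tmul_add, mul_comm (c _) (c _), hsym]

theorem coaction_mul_eq_sum {k C H : Type*} [CommSemiring k] [Semiring C] [Algebra k C]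
    [Semiring H] [Algebra k H] {ρH : H →ₗ[k] C ⊗[k] H}
    (hmul : ∀ x y : H, ρH (x * y) = ρH x * ρH y)
    {ι κ : Type*} [Fintype ι] [Fintype κ] {x y : H} {c : ι → C} {xx : ι → H}
    {d : κ → C} {yy : κ → H}
    (hx : ρH x = ∑ i, c i ⊗ₜ xx i) (hy : ρH y = ∑ j, d j ⊗ₜ yy j) :
    ρH (x * y) = ∑ i, ∑ j, (c i * d j) ⊗ₜ (xx i * yy j) := by
  simp only [hmul, hx, hy, sum_mul_sum, Algebra.TensorProduct.tmul_mul_tmul]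

theorem stmt19_general (k C L V H : Type*) [CommRing k]
    (h2k : ∀ a : k, 2 * a = 0 → a = 0)
    [CommRing C] [HopfAlgebra k C] [Module.Flat k C]
    [AddCommGroup L] [Module k L] [Module.Flat k L]
    [AddCommGroup V] [Module k V]
    [Ring H] [Algebra k H]
    -- the super-bracket on the odd part, and the unique half of [v,v]
    (b : V →ₗ[k] V →ₗ[k] L) (hsym : ∀ v w : V, b v w = b w v)
    (h : V → L) (hhalf : ∀ v : V, (2 : k) • h v = b v v)
    -- left C-comodule structures on g₀ = L and g₁ = V
    (ρ0 : L →ₗ[k] C ⊗[k] L) (ρ1 : V →ₗ[k] C ⊗[k] V)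
    -- the super-bracket g₁ ⊗ g₁ → g₀ is C-colinear
    (hcolin : ρ0 ∘ₗ TensorProduct.lift b =
      (TensorProduct.map (LinearMap.mul' k C) (TensorProduct.lift b)) ∘ₗ
        (TensorProduct.tensorTensorTensorComm k C V C V).toLinearMap ∘ₗ
          (TensorProduct.map ρ1 ρ1))
    -- H = J ⋉ T(g₁), a C-comodule algebra containing L (via jι) and V (via vι)
    (jι : L →ₗ[k] H) (vι : V →ₗ[k] H)
    (ρH : H →ₗ[k] C ⊗[k] H)
    (hρHmul : ∀ x y : H, ρH (x * y) = ρH x * ρH y)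
    (hρHj : ∀ u : L, ρH (jι u) = (LinearMap.lTensor C jι) (ρ0 u))
    (hρHv : ∀ v : V, ρH (vι v) = (LinearMap.lTensor C vι) (ρ1 v)) :
    ∀ (n : ℕ) (c : Fin n → C) (vv : Fin n → V) (v : V),
      ρ1 v = ∑ i, c i ⊗ₜ vv i →
      -- the coaction of the half-square
      (ρ0 (h v) =
        (∑ i, (c i * c i) ⊗ₜ h (vv i)) +
          ∑ i, ∑ j ∈ Finset.univ.filter (fun j => i < j),
            (c i * c j) ⊗ₜ b (vv i) (vv j)) ∧
      -- consequently v² − (1/2)[v,v] generates a C-costable submodule of H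
      (ρH (vι v * vι v - jι (h v)) =
        (∑ i, (c i * c i) ⊗ₜ (vι (vv i) * vι (vv i) - jι (h (vv i)))) +
          ∑ i, ∑ j ∈ Finset.univ.filter (fun j => i < j),
            (c i * c j) ⊗ₜ
              (vι (vv i) * vι (vv j) + vι (vv j) * vι (vv i) - jι (b (vv i) (vv j)))) := by
  intro n c vv v hv
  have hhalf_sq := coaction_half_square h2k hsym hhalf hcolin hv
  refine ⟨hhalf_sq, ?_⟩
  have hvι : ρH (vι v) = ∑ i, c i ⊗ₜ vι (vv i) := by
    simp only [hρHv, hv, map_sum, LinearMap.lTensor_tmul]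
  rw [map_sub, coaction_mul_eq_sum hρHmul hvι hvι,
    sum_sum_eq_sum_diag_add_sum_lt fun i j => (c i * c j) ⊗ₜ (vι (vv i) * vι (vv j)),
    hρHj, hhalf_sq]
  simp only [map_add, map_sum, LinearMap.lTensor_tmul, mul_comm (c _) (c _), tmul_sub, tmul_add,
    sum_sub_distrib, sum_add_distrib]
  abel

/-- Coaction formula for half-squares.  k is 2-torsion free, C = O(G) is a
k-flat commutative Hopf algebra, g₀ = L is k-flat, and the odd part V is a
left C-comodule via ρ1 with the super-bracket b : V ⊗ V → L C-colinear.
Then for ρ1 v = Σᵢ cᵢ ⊗ vᵢ one has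
ρ0((1/2)[v,v]) = Σᵢ cᵢ² ⊗ (1/2)[vᵢ,vᵢ] + Σ_{i<j} cᵢcⱼ ⊗ [vᵢ,vⱼ], and in
H = J ⋉ T(g₁) the element v² − (1/2)[v,v] generates a C-costable submodule:
ρ(v² − (1/2)[v,v]) = Σᵢ cᵢ² ⊗ (vᵢ² − (1/2)[vᵢ,vᵢ])
  + Σ_{i<j} cᵢcⱼ ⊗ (vᵢvⱼ + vⱼvᵢ − [vᵢ,vⱼ]). -/
theorem stmt19 (k C L V H : Type*) [CommRing k]
    (h2k : ∀ a : k, 2 * a = 0 → a = 0)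
    [CommRing C] [HopfAlgebra k C] [Module.Flat k C]
    [AddCommGroup L] [Module k L] [Module.Flat k L]
    [AddCommGroup V] [Module k V]
    [Ring H] [Algebra k H]
    -- the super-bracket on the odd part, and the unique half of [v,v]
    (b : V →ₗ[k] V →ₗ[k] L) (hsym : ∀ v w : V, b v w = b w v)
    (h : V → L) (hhalf : ∀ v : V, (2 : k) • h v = b v v)
    -- left C-comodule structures on g₀ = L and g₁ = V
    (ρ0 : L →ₗ[k] C ⊗[k] L) (ρ1 : V →ₗ[k] C ⊗[k] V)
    -- the super-bracket g₁ ⊗ g₁ → g₀ is C-colinear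
    (hcolin : ρ0 ∘ₗ TensorProduct.lift b =
      (TensorProduct.map (LinearMap.mul' k C) (TensorProduct.lift b)) ∘ₗ
        (TensorProduct.tensorTensorTensorComm k C V C V).toLinearMap ∘ₗ
          (TensorProduct.map ρ1 ρ1))
    -- H = J ⋉ T(g₁), a C-comodule algebra containing L (via jι) and V (via vι)
    (jι : L →ₗ[k] H) (vι : V →ₗ[k] H)
    (ρH : H →ₗ[k] C ⊗[k] H)
    (hρH1 : ρH 1 = 1 ⊗ₜ 1)
    (hρHmul : ∀ x y : H, ρH (x * y) = ρH x * ρH y)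
    (hρHj : ∀ u : L, ρH (jι u) = (LinearMap.lTensor C jι) (ρ0 u))
    (hρHv : ∀ v : V, ρH (vι v) = (LinearMap.lTensor C vι) (ρ1 v)) :
    ∀ (n : ℕ) (c : Fin n → C) (vv : Fin n → V) (v : V),
      ρ1 v = ∑ i, c i ⊗ₜ vv i →
      -- the coaction of the half-square
      (ρ0 (h v) =
        (∑ i, (c i * c i) ⊗ₜ h (vv i)) +
          ∑ i, ∑ j ∈ Finset.univ.filter (fun j => i < j),
            (c i * c j) ⊗ₜ b (vv i) (vv j)) ∧
      -- consequently v² − (1/2)[v,v] generates a C-costable submodule of H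
      (ρH (vι v * vι v - jι (h v)) =
        (∑ i, (c i * c i) ⊗ₜ (vι (vv i) * vι (vv i) - jι (h (vv i)))) +
          ∑ i, ∑ j ∈ Finset.univ.filter (fun j => i < j),
            (c i * c j) ⊗ₜ
              (vι (vv i) * vι (vv j) + vι (vv j) * vι (vv i) - jι (b (vv i) (vv j)))) :=
  stmt19_general k C L V H h2k b hsym h hhalf ρ0 ρ1 hcolin jι vι ρH hρHmul hρHj hρHv
end
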